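/- arXiv:1812.05580 — 2 statements merged into one kernel-verified Lean document; each statement's English description precedes it below -/
import Mathlib

section
/- For every natural number n, the number of partitions of n in which 1 appears at most once and, for every positive integer j, the total number of appearances of j and j+1 together is at most 2, equals the number of partitions of n such that, with 2j the largest repeated part, every positive even integer less than 2j appears at least twice, no odd part less than 2j appears, each odd part appears at most once, and no part greater than 2j is repeated. -/
/-- The largest repeated part of a partition (`0` if no part is repeated). -/
def largestRepeatedPart {n : ℕ} (π : n.Partition) : ℕ :=
  (π.parts.toFinset.filter (fun j => 2 ≤ π.parts.count j)).sup id

/-!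
Both families are built up one repeated part at a time. In a Gordon partition the largest
repeated part `L` occurs exactly twice and `L ± 1` do not occur; deleting the two copies of `L`
and lowering every larger part by two leaves a Gordon partition `π` with one repeated part
fewer, in which `L - 1` is a gap lying above every repeated part. Conversely such a gap `e` of
`π` determines the partition back, and `height π e = e + #{parts of π above e}` runs through
every value above `height π (largestRepeated π)` exactly once along these gaps. On the `A₂`
side, a partition with largest repeated part `2 (j + 1)` arises uniquely from one with largest
repeated part `2 j` by raising every part by two and adding `c + 2` twos, for any `c`. Matching
the gap with `c` gives, by induction on the number of repeated parts, a bijection sending a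
Gordon partition `M` to an `A₂`-partition with `height M (largestRepeated M)` parts; both
insertions add twice that number to the sum, so the bijection preserves the sum.
-/

namespace GordonAndrews

open Multiset

lemma count_map_add_two (N : Multiset ℕ) (x : ℕ) :
    (N.map (· + 2)).count x = if 2 ≤ x then N.count (x - 2) else 0 := by
  rw [count_map]
  split_ifs with hx
  · rw [count_eq_card_filter_eq]
    exact congrArg card (filter_congr fun a _ => by omega)
  · exact card_eq_zero.2 (filter_eq_nil.2 fun a _ => by omega)

lemma count_map_sub_two (N : Multiset ℕ) (hN : ∀ a ∈ N, 2 ≤ a) (x : ℕ) :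
    (N.map (· - 2)).count x = N.count (x + 2) := by
  rw [count_map, count_eq_card_filter_eq]
  exact congrArg card (filter_congr fun a ha => by have := hN a ha; omega)

lemma sum_map_add_two (N : Multiset ℕ) : (N.map (· + 2)).sum = N.sum + 2 * N.card := by
  simp [sum_map_add, mul_comm]

def repeated (M : Multiset ℕ) : Finset ℕ := M.toFinset.filter (fun j => 2 ≤ M.count j)

def largestRepeated (M : Multiset ℕ) : ℕ := (repeated M).sup id

variable {M : Multiset ℕ} {x : ℕ}

lemma mem_repeated : x ∈ repeated M ↔ 2 ≤ M.count x := by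
  simp only [repeated, Finset.mem_filter, mem_toFinset, and_iff_right_iff_imp]
  exact fun h => count_pos.1 (by omega)

lemma largestRepeated_le_iff {b : ℕ} :
    largestRepeated M ≤ b ↔ ∀ x, 2 ≤ M.count x → x ≤ b := by
  simp [largestRepeated, Finset.sup_le_iff, mem_repeated]

lemma le_largestRepeated (h : 2 ≤ M.count x) : x ≤ largestRepeated M :=
  largestRepeated_le_iff.1 le_rfl x h

lemma count_le_one_of_largestRepeated_lt (h : largestRepeated M < x) : M.count x ≤ 1 := by
  by_contra! h'
  exact absurd (le_largestRepeated h') (by omega)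

lemma two_le_count_largestRepeated (h : (repeated M).Nonempty) :
    2 ≤ M.count (largestRepeated M) := by
  obtain ⟨x, hx, hsup⟩ := Finset.exists_mem_eq_sup _ h id
  rw [largestRepeated, hsup]
  exact mem_repeated.1 hx

lemma repeated_nonempty (h : largestRepeated M ≠ 0) : (repeated M).Nonempty :=
  Finset.nonempty_iff_ne_empty.2 fun he => h (by simp [largestRepeated, he])

def height (M : Multiset ℕ) (x : ℕ) : ℕ := x + (M.filter (x < ·)).card

lemma height_succ (M : Multiset ℕ) (x : ℕ) :
    height M (x + 1) + M.count (x + 1) = height M x + 1 := by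
  suffices (M.filter (x + 1 < ·)).card + M.count (x + 1) = (M.filter (x < ·)).card by
    unfold height; omega
  induction M using Multiset.induction_on with
  | empty => simp
  | cons a s ih =>
    simp only [filter_cons, count_cons]
    split_ifs <;> simp_all <;> omega

lemma height_mono {y : ℕ} (hx : largestRepeated M ≤ x) (hxy : x ≤ y) :
    height M x ≤ height M y := by
  induction y, hxy using Nat.le_induction with
  | base => rfl
  | succ y hxy ih =>
    have := height_succ M y
    have := count_le_one_of_largestRepeated_lt (M := M) (x := y + 1) (by omega)
    omega

def IsGap (M : Multiset ℕ) (e : ℕ) : Prop := largestRepeated M < e ∧ M.count e = 0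

lemma height_lt_height_of_count_eq_zero {e : ℕ} (hx : largestRepeated M ≤ x) (hxe : x < e)
    (he : M.count e = 0) : height M x < height M e := by
  obtain ⟨y, rfl⟩ : ∃ y, e = y + 1 := ⟨e - 1, by omega⟩
  have := height_mono hx (show x ≤ y by omega)
  have := height_succ M y
  omega

lemma exists_height_ge (M : Multiset ℕ) (T : ℕ) :
    ∃ x, largestRepeated M ≤ x ∧ T ≤ height M x :=
  ⟨largestRepeated M + T, by omega, by unfold height; omega⟩

def gapOfHeight (M : Multiset ℕ) (T : ℕ) : ℕ := Nat.find (exists_height_ge M T)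

lemma isGap_gapOfHeight {T : ℕ} (hT : height M (largestRepeated M) < T) :
    IsGap M (gapOfHeight M T) ∧ height M (gapOfHeight M T) = T := by
  obtain ⟨hle, hge⟩ :
      largestRepeated M ≤ gapOfHeight M T ∧ T ≤ height M (gapOfHeight M T) :=
    Nat.find_spec (exists_height_ge M T)
  set g := gapOfHeight M T
  have hpos : largestRepeated M < g := lt_of_le_of_ne hle (by rintro h; rw [← h] at hge; omega)
  have hprev : ¬(largestRepeated M ≤ g - 1 ∧ T ≤ height M (g - 1)) :=
    Nat.find_min (exists_height_ge M T) (by omega : g - 1 < g)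
  have hstep := height_succ M (g - 1)
  rw [Nat.sub_add_cancel (by omega)] at hstep
  exact ⟨⟨hpos, by omega⟩, by omega⟩

lemma gapOfHeight_height {e : ℕ} (he : IsGap M e) : gapOfHeight M (height M e) = e :=
  (Nat.find_eq_iff _).2 ⟨⟨he.1.le, le_rfl⟩, fun _ hy h =>
    absurd (height_lt_height_of_count_eq_zero h.1 hy he.2) (by omega)⟩

def gapEquiv (M : Multiset ℕ) : {e // IsGap M e} ≃ ℕ where
  toFun e := height M e - height M (largestRepeated M) - 1
  invFun c := ⟨gapOfHeight M (height M (largestRepeated M) + c + 1),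
    (isGap_gapOfHeight (by omega)).1⟩
  left_inv e := by
    have := height_lt_height_of_count_eq_zero le_rfl e.2.1 e.2.2
    ext
    simp only
    rw [show height M (largestRepeated M) + (height M e - height M (largestRepeated M) - 1) + 1
      = height M e by omega, gapOfHeight_height e.2]
  right_inv c := by
    simp only [(isGap_gapOfHeight (M := M) (T := height M (largestRepeated M) + c + 1)
      (by omega)).2]
    omega

def contract (M : Multiset ℕ) (d : ℕ) : Multiset ℕ :=
  M.filter (· < d) + (M.filter (d < ·)).map (· - 2)

def expand (M : Multiset ℕ) (e : ℕ) : Multiset ℕ :=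
  M.filter (· ≤ e) + replicate 2 (e + 1) + (M.filter (e < ·)).map (· + 2)

lemma count_contract (M : Multiset ℕ) {d : ℕ} (hd : 1 ≤ d) (x : ℕ) :
    (contract M d).count x =
      (if x < d then M.count x else 0) + (if d < x + 2 then M.count (x + 2) else 0) := by
  rw [contract, count_add, count_filter,
    count_map_sub_two _ (fun a ha => by have := (mem_filter.1 ha).2; omega), count_filter]

lemma count_expand (M : Multiset ℕ) (e x : ℕ) :
    (expand M e).count x = (if x ≤ e then M.count x else 0) + (if x = e + 1 then 2 else 0)
      + (if e + 2 < x then M.count (x - 2) else 0) := by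
  rw [expand, count_add, count_add, count_filter, count_replicate, count_map_add_two,
    count_filter]
  split_ifs <;> omega

lemma sum_expand (M : Multiset ℕ) (e : ℕ) :
    (expand M e).sum = M.sum + 2 * (height M e + 1) := by
  have hsplit := congrArg sum (filter_add_not (· ≤ e) M)
  rw [filter_congr (q := (e < ·)) (fun _ _ => not_le)] at hsplit
  rw [expand, sum_add, sum_add, sum_map_add_two, sum_replicate, height, ← hsplit, sum_add]
  simp only [smul_eq_mul]
  ring

lemma height_expand (M : Multiset ℕ) (e : ℕ) :
    height (expand M e) (e + 1) = height M e + 1 := by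
  have h₁ : (M.filter (· ≤ e)).filter (e + 1 < ·) = 0 := filter_eq_nil.2 fun a ha => by
    have := (mem_filter.1 ha).2; omega
  have h₂ : (replicate 2 (e + 1)).filter (e + 1 < ·) = 0 := filter_eq_nil.2 fun a ha => by
    rw [eq_of_mem_replicate ha]; omega
  have h₃ : ((M.filter (e < ·)).map (· + 2)).filter (e + 1 < ·) =
      (M.filter (e < ·)).map (· + 2) := filter_eq_self.2 fun a ha => by
      obtain ⟨b, hb, rfl⟩ := mem_map.1 ha; have := (mem_filter.1 hb).2; omega
  simp only [height, expand, filter_add, h₁, h₂, h₃, card_add, card_map, card_zero]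
  omega

def IsGordon (M : Multiset ℕ) : Prop :=
  M.count 1 ≤ 1 ∧ ∀ j, 1 ≤ j → M.count j + M.count (j + 1) ≤ 2

lemma IsGordon.isolated (hG : IsGordon M) (h0 : M.count 0 = 0) {d : ℕ} (hd : 2 ≤ M.count d) :
    2 ≤ d ∧ M.count d = 2 ∧ M.count (d - 1) = 0 ∧ M.count (d + 1) = 0 := by
  have hd0 : d ≠ 0 := by rintro rfl; omega
  have hd1 : d ≠ 1 := by rintro rfl; have := hG.1; omega
  have h₁ := hG.2 d (by omega)
  have h₂ := hG.2 (d - 1) (by omega)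
  rw [Nat.sub_add_cancel (by omega)] at h₂
  omega

lemma count_contract_largestRepeated (hG : IsGordon M) (h0 : M.count 0 = 0)
    (hne : (repeated M).Nonempty) (x : ℕ) :
    (contract M (largestRepeated M)).count x =
      if x + 1 < largestRepeated M then M.count x
      else if x + 1 = largestRepeated M then 0 else M.count (x + 2) := by
  obtain ⟨hL, -, hl, hr⟩ := hG.isolated h0 (two_le_count_largestRepeated hne)
  rw [count_contract M (by omega)]
  split_ifs <;> try omega
  obtain rfl : x = largestRepeated M - 1 := by omega
  rw [show largestRepeated M - 1 + 2 = largestRepeated M + 1 by omega, hl, hr]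

lemma isGordon_contract (hG : IsGordon M) (h0 : M.count 0 = 0) (hne : (repeated M).Nonempty) :
    (contract M (largestRepeated M)).count 0 = 0 ∧
      IsGordon (contract M (largestRepeated M)) := by
  have hc := count_contract_largestRepeated hG h0 hne
  obtain ⟨hL, -⟩ := hG.isolated h0 (two_le_count_largestRepeated hne)
  refine ⟨?_, ?_, fun j hj => ?_⟩
  · rw [hc]; split_ifs <;> omega
  · rw [hc]; have := hG.1; split_ifs <;> omega
  · have h₁ := hG.2 j hj
    have h₂ := hG.2 (j + 2) (by omega)
    rw [show j + 2 + 1 = j + 1 + 2 by ring] at h₂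
    rw [hc, hc]
    split_ifs <;> omega

lemma repeated_contract (hG : IsGordon M) (h0 : M.count 0 = 0) (hne : (repeated M).Nonempty) :
    repeated (contract M (largestRepeated M)) = (repeated M).erase (largestRepeated M) := by
  obtain ⟨-, -, hl, -⟩ := hG.isolated h0 (two_le_count_largestRepeated hne)
  ext x
  have h₁ := le_largestRepeated (M := M) (x := x)
  have h₂ := le_largestRepeated (M := M) (x := x + 2)
  have h₃ : x = largestRepeated M - 1 → M.count x = 0 := fun h => h ▸ hl
  rw [mem_repeated, Finset.mem_erase, mem_repeated, count_contract_largestRepeated hG h0 hne]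
  split_ifs <;> omega

lemma isGap_contract (hG : IsGordon M) (h0 : M.count 0 = 0) (hne : (repeated M).Nonempty) :
    IsGap (contract M (largestRepeated M)) (largestRepeated M - 1) := by
  have hc := count_contract_largestRepeated hG h0 hne
  obtain ⟨hL, -⟩ := hG.isolated h0 (two_le_count_largestRepeated hne)
  refine ⟨?_, by rw [hc]; split_ifs <;> omega⟩
  suffices largestRepeated (contract M (largestRepeated M)) ≤ largestRepeated M - 2 by omega
  refine largestRepeated_le_iff.2 fun x hx => ?_
  have h₁ := le_largestRepeated (M := M) (x := x)
  have h₂ := le_largestRepeated (M := M) (x := x + 2)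
  rw [hc] at hx
  split_ifs at hx <;> omega

lemma expand_contract (hG : IsGordon M) (h0 : M.count 0 = 0) (hne : (repeated M).Nonempty) :
    expand (contract M (largestRepeated M)) (largestRepeated M - 1) = M := by
  have hc := count_contract_largestRepeated hG h0 hne
  obtain ⟨hL, hLc, hl, hr⟩ := hG.isolated h0 (two_le_count_largestRepeated hne)
  ext x
  have h₁ : x = largestRepeated M - 1 → M.count x = 0 := fun h => h ▸ hl
  have h₂ : x = largestRepeated M + 1 → M.count x = 0 := fun h => h ▸ hr
  have h₃ : x = largestRepeated M → M.count x = 2 := fun h => h ▸ hLc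
  rw [count_expand]
  rcases Nat.lt_or_ge x 2 with hx | hx
  · rw [hc]; split_ifs <;> omega
  obtain ⟨y, rfl⟩ : ∃ y, x = y + 2 := ⟨x - 2, by omega⟩
  rw [hc, add_tsub_cancel_right, hc]
  split_ifs <;> omega

lemma isGordon_expand (hG : IsGordon M) (h0 : M.count 0 = 0) {e : ℕ} (he : IsGap M e) :
    (expand M e).count 0 = 0 ∧ IsGordon (expand M e) := by
  obtain ⟨hlt, hce⟩ := he
  refine ⟨by simp [count_expand, h0], by
    have := hG.1; rw [count_expand]; split_ifs <;> omega, fun j hj => ?_⟩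
  rcases Nat.lt_or_ge j (e + 2) with hj' | hj'
  · have h₁ := hG.2 j hj
    have h₂ : j = e → M.count j = 0 := fun h => h ▸ hce
    rw [count_expand, count_expand]
    split_ifs <;> omega
  · obtain ⟨k, rfl⟩ : ∃ k, j = k + 2 := ⟨j - 2, by omega⟩
    have h₁ := hG.2 k (by omega)
    have h₂ : k = e → M.count k = 0 := fun h => h ▸ hce
    have h₃ := count_le_one_of_largestRepeated_lt (M := M) (x := k + 1) (by omega)
    rw [count_expand, count_expand, add_tsub_cancel_right, show k + 2 + 1 - 2 = k + 1 by omega]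
    split_ifs <;> omega

lemma largestRepeated_expand {e : ℕ} (he : largestRepeated M < e) :
    largestRepeated (expand M e) = e + 1 := by
  refine le_antisymm (largestRepeated_le_iff.2 fun x hx => ?_)
    (le_largestRepeated (by simp [count_expand]))
  have := le_largestRepeated (M := M) (x := x - 2)
  rw [count_expand] at hx
  split_ifs at hx <;> omega

lemma repeated_expand {e : ℕ} (he : largestRepeated M < e) :
    repeated (expand M e) = insert (e + 1) (repeated M) := by
  ext x
  have h₁ := le_largestRepeated (M := M) (x := x)
  have h₂ := le_largestRepeated (M := M) (x := x - 2)
  rw [mem_repeated, Finset.mem_insert, mem_repeated, count_expand]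
  split_ifs <;> omega

lemma succ_notMem_repeated {e : ℕ} (he : largestRepeated M < e) : e + 1 ∉ repeated M :=
  fun h => by have := le_largestRepeated (mem_repeated.1 h); omega

lemma contract_expand {e : ℕ} (he : M.count e = 0) : contract (expand M e) (e + 1) = M := by
  ext x
  have h₁ : x = e → M.count x = 0 := fun h => h ▸ he
  rw [count_contract _ (by omega), count_expand, count_expand, add_tsub_cancel_right]
  split_ifs <;> omega

abbrev GordonOfRank (r : ℕ) : Type :=
  {M : Multiset ℕ // (M.count 0 = 0 ∧ IsGordon M) ∧ (repeated M).card = r}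

def gordonSuccEquiv (r : ℕ) :
    GordonOfRank (r + 1) ≃ Σ π : GordonOfRank r, {e // IsGap π.1 e} where
  toFun M :=
    have hne : (repeated M.1).Nonempty := Finset.card_pos.1 (by rw [M.2.2]; omega)
    ⟨⟨contract M.1 (largestRepeated M.1), isGordon_contract M.2.1.2 M.2.1.1 hne, by
      rw [repeated_contract M.2.1.2 M.2.1.1 hne,
        Finset.card_erase_of_mem (mem_repeated.2 (two_le_count_largestRepeated hne)), M.2.2,
        add_tsub_cancel_right]⟩,
      ⟨largestRepeated M.1 - 1, isGap_contract M.2.1.2 M.2.1.1 hne⟩⟩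
  invFun p := ⟨expand p.1.1 p.2.1, isGordon_expand p.1.2.1.2 p.1.2.1.1 p.2.2, by
    rw [repeated_expand p.2.2.1, Finset.card_insert_of_notMem (succ_notMem_repeated p.2.2.1),
      p.1.2.2]⟩
  left_inv M := Subtype.ext <|
    expand_contract M.2.1.2 M.2.1.1 (Finset.card_pos.1 (by rw [M.2.2]; omega))
  right_inv p := Sigma.subtype_ext
    (Subtype.ext <| by simp only [largestRepeated_expand p.2.2.1, contract_expand p.2.2.2])
    (by simp only [largestRepeated_expand p.2.2.1, add_tsub_cancel_right])

def IsAndrews (M : Multiset ℕ) : Prop :=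
  (∀ j, Odd j → M.count j ≤ 1) ∧
    (∀ j, Odd j → j < largestRepeated M → M.count j = 0) ∧
    ∀ j, Even j → 0 < j → j < largestRepeated M → 2 ≤ M.count j

/-- A partition in the family `A₂` whose largest repeated part is `2 * j`. -/
def IsAndrewsOfRank (j : ℕ) (M : Multiset ℕ) : Prop :=
  M.count 0 = 0 ∧ (∀ k, 0 < k → k ≤ j → 2 ≤ M.count (2 * k)) ∧
    (∀ x, Odd x → x < 2 * j → M.count x = 0) ∧ ∀ x, 2 * j < x → M.count x ≤ 1

lemma IsAndrewsOfRank.largestRepeated_eq {j : ℕ} (h : IsAndrewsOfRank j M) :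
    largestRepeated M = 2 * j := by
  refine le_antisymm (largestRepeated_le_iff.2 fun x hx => ?_) ?_
  · by_contra hlt
    have := h.2.2.2 x (by omega)
    omega
  · rcases j.eq_zero_or_pos with rfl | hj
    · simp
    · exact le_largestRepeated (h.2.1 j hj le_rfl)

lemma isAndrewsOfRank_iff {j : ℕ} :
    IsAndrewsOfRank j M ↔ (M.count 0 = 0 ∧ IsAndrews M) ∧ largestRepeated M / 2 = j := by
  constructor
  · intro h
    have hL := h.largestRepeated_eq
    refine ⟨⟨h.1, fun x hx => ?_, fun x hx hxL => h.2.2.1 x hx (by omega),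
      fun x hx hx0 hxL => ?_⟩, by omega⟩
    · rw [Nat.odd_iff] at hx
      rcases Nat.lt_or_ge x (2 * j) with hlt | hge
      · rw [h.2.2.1 x (Nat.odd_iff.2 hx) hlt]; omega
      · exact h.2.2.2 x (by omega)
    · obtain ⟨k, rfl⟩ := hx
      rw [← two_mul]
      exact h.2.1 k (by omega) (by omega)
  · rintro ⟨⟨h0, hodd, hbelow, heven⟩, rfl⟩
    have hL : largestRepeated M % 2 = 0 := by
      by_contra hL
      have := hodd (largestRepeated M) (Nat.odd_iff.2 (by omega))
      have := two_le_count_largestRepeated (repeated_nonempty (M := M) (by omega))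
      omega
    refine ⟨h0, fun k hk hkL => ?_, fun x hx hxL => hbelow x hx (by omega),
      fun x hx => count_le_one_of_largestRepeated_lt (by omega)⟩
    rcases Nat.lt_or_ge (2 * k) (largestRepeated M) with hlt | hge
    · exact heven _ (even_two_mul k) (by omega) hlt
    · rw [show 2 * k = largestRepeated M by omega]
      exact two_le_count_largestRepeated (repeated_nonempty (by omega))

abbrev AndrewsOfRank (j : ℕ) : Type := {M : Multiset ℕ // IsAndrewsOfRank j M}

def raise (M : Multiset ℕ) (c : ℕ) : Multiset ℕ := M.map (· + 2) + replicate (c + 2) 2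

lemma count_raise (M : Multiset ℕ) (c x : ℕ) :
    (raise M c).count x =
      (if 2 ≤ x then M.count (x - 2) else 0) + (if x = 2 then c + 2 else 0) := by
  rw [raise, count_add, count_map_add_two, count_replicate]
  simp only [eq_comm]

lemma card_raise (M : Multiset ℕ) (c : ℕ) : (raise M c).card = M.card + c + 2 := by
  simp [raise, add_assoc]

lemma sum_raise (M : Multiset ℕ) (c : ℕ) : (raise M c).sum = M.sum + 2 * (raise M c).card := by
  rw [card_raise, raise, sum_add, sum_map_add_two, sum_replicate, smul_eq_mul]
  ring

lemma isAndrewsOfRank_raise {j : ℕ} (h : IsAndrewsOfRank j M) (c : ℕ) :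
    IsAndrewsOfRank (j + 1) (raise M c) := by
  obtain ⟨h0, heven, hodd, htop⟩ := h
  refine ⟨by simp [count_raise], fun k hk hkj => ?_, fun x hx hxj => ?_, fun x hx => ?_⟩
  · obtain ⟨m, rfl⟩ : ∃ m, k = m + 1 := ⟨k - 1, by omega⟩
    rw [count_raise, show 2 * (m + 1) - 2 = 2 * m by omega]
    rcases m.eq_zero_or_pos with rfl | hm
    · simp [h0]
    · have := heven m hm (by omega)
      split_ifs <;> omega
  · rw [count_raise]
    rw [Nat.odd_iff] at hx
    rcases Nat.lt_or_ge x 3 with hx3 | hx3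
    · split_ifs <;> omega
    · rw [if_pos (by omega), hodd (x - 2) (Nat.odd_iff.2 (by omega)) (by omega),
        if_neg (by omega)]
  · rw [count_raise, if_pos (by omega), if_neg (by omega)]
    exact htop _ (by omega)

lemma isAndrewsOfRank_contract {j : ℕ} (h : IsAndrewsOfRank (j + 1) M) :
    IsAndrewsOfRank j (contract M 2) := by
  obtain ⟨h0, heven, hodd, htop⟩ := h
  have hc : ∀ x, 0 < x → (contract M 2).count x = M.count (x + 2) := fun x hx => by
    rw [count_contract M (by omega)]
    have h1 := hodd 1 odd_one (by omega)
    have : x = 1 → M.count x = 0 := fun h => h ▸ h1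
    split_ifs <;> omega
  refine ⟨?_, fun k hk hkj => ?_, fun x hx hxj => ?_, fun x hx => ?_⟩
  · rw [count_contract M (by omega)]; simp [h0]
  · rw [hc _ (by omega), show 2 * k + 2 = 2 * (k + 1) by ring]
    exact heven (k + 1) (by omega) (by omega)
  · rw [hc _ hx.pos]
    exact hodd (x + 2) (hx.add_even even_two) (by omega)
  · rw [hc _ (by omega)]
    exact htop (x + 2) (by omega)

lemma raise_contract {j : ℕ} (h : IsAndrewsOfRank (j + 1) M) :
    raise (contract M 2) (M.count 2 - 2) = M := by
  obtain ⟨h0, heven, hodd, -⟩ := h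
  have h1 := hodd 1 odd_one (by omega)
  have h2 := heven 1 one_pos (by omega)
  ext x
  rw [count_raise]
  rcases Nat.lt_or_ge x 2 with hx | hx
  · interval_cases x <;> simp [h0, h1]
  obtain ⟨y, rfl⟩ : ∃ y, x = y + 2 := ⟨x - 2, by omega⟩
  rw [add_tsub_cancel_right, count_contract M (by omega)]
  rcases Nat.lt_or_ge y 2 with hy | hy
  · interval_cases y <;> simp_all
  · split_ifs <;> omega

lemma contract_raise (h0 : M.count 0 = 0) (c : ℕ) : contract (raise M c) 2 = M := by
  ext x
  have : x = 0 → M.count x = 0 := fun h => h ▸ h0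
  rw [count_contract _ (by omega), count_raise, count_raise, add_tsub_cancel_right]
  split_ifs <;> omega

def andrewsSuccEquiv (j : ℕ) : AndrewsOfRank (j + 1) ≃ AndrewsOfRank j × ℕ where
  toFun σ := (⟨contract σ.1 2, isAndrewsOfRank_contract σ.2⟩, σ.1.count 2 - 2)
  invFun p := ⟨raise p.1.1 p.2, isAndrewsOfRank_raise p.1.2 p.2⟩
  left_inv σ := Subtype.ext (raise_contract σ.2)
  right_inv p :=
    Prod.ext (Subtype.ext (contract_raise p.1.2.1 p.2)) (by simp [count_raise, p.1.2.1])

lemma gordonOfRank_zero_iff :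
    ((M.count 0 = 0 ∧ IsGordon M) ∧ (repeated M).card = 0) ↔ IsAndrewsOfRank 0 M := by
  have hsimple : (repeated M).card = 0 ↔ ∀ x, M.count x < 2 := by
    simp [Finset.card_eq_zero, Finset.eq_empty_iff_forall_notMem, mem_repeated]
  rw [hsimple]
  constructor
  · rintro ⟨⟨h0, -⟩, hr⟩
    exact ⟨h0, fun k hk hk' => by omega, fun x _ hx => by omega,
      fun x _ => by have := hr x; omega⟩
  · rintro ⟨h0, -, -, htop⟩
    have hr : ∀ x, M.count x < 2 := fun x => by
      rcases x.eq_zero_or_pos with rfl | hx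
      · omega
      · have := htop x (by omega); omega
    exact ⟨⟨h0, by have := hr 1; omega,
      fun j _ => by have := hr j; have := hr (j + 1); omega⟩, hr⟩

def gordonAndrewsEquiv : (r : ℕ) → GordonOfRank r ≃ AndrewsOfRank r
  | 0 => Equiv.subtypeEquivRight fun _ => gordonOfRank_zero_iff
  | r + 1 => (gordonSuccEquiv r).trans <| (Equiv.sigmaCongrRight fun π => gapEquiv π.1).trans <|
      (Equiv.sigmaEquivProd _ _).trans <|
        ((gordonAndrewsEquiv r).prodCongr (Equiv.refl ℕ)).trans (andrewsSuccEquiv r).symm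

lemma gordonAndrewsEquiv_sum_card (r : ℕ) (M : GordonOfRank r) :
    (gordonAndrewsEquiv r M).1.sum = M.1.sum ∧
      (gordonAndrewsEquiv r M).1.card = height M.1 (largestRepeated M.1) := by
  induction r with
  | zero =>
    obtain ⟨M, ⟨h0, -⟩, hr⟩ := M
    have hL : largestRepeated M = 0 := by simp [largestRepeated, Finset.card_eq_zero.1 hr]
    refine ⟨rfl, ?_⟩
    rw [hL, height, filter_eq_self.2 fun a ha => Nat.pos_of_ne_zero ?_, zero_add]
    · rfl
    · rintro rfl; exact count_eq_zero.1 h0 ha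
  | succ r ih =>
    obtain ⟨⟨π, e⟩, rfl⟩ := (gordonSuccEquiv r).symm.surjective M
    obtain ⟨hsum, hcard⟩ := ih π
    have hlt := height_lt_height_of_count_eq_zero le_rfl e.2.1 e.2.2
    have hval : gordonAndrewsEquiv (r + 1) ((gordonSuccEquiv r).symm ⟨π, e⟩) =
        (andrewsSuccEquiv r).symm (gordonAndrewsEquiv r π, gapEquiv π.1 e) := by
      simp [gordonAndrewsEquiv]
    rw [hval]
    show (raise _ _).sum = (expand _ _).sum ∧
      (raise _ _).card = height (expand _ _) (largestRepeated (expand _ _))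
    rw [sum_raise, card_raise, sum_expand, largestRepeated_expand e.2.1, height_expand, hsum,
      hcard]
    simp only [gapEquiv, Equiv.coe_fn_mk]
    omega

def subtypeEquivSigmaFiber {α β : Type*} (p : α → Prop) (f : α → β) :
    {a // p a} ≃ Σ b, {a // p a ∧ f a = b} :=
  (Equiv.sigmaFiberEquiv (f ∘ Subtype.val)).symm.trans <|
    Equiv.sigmaCongrRight fun b => Equiv.subtypeSubtypeEquivSubtypeInter p (f · = b)

def gordonEquivAndrews : {M : Multiset ℕ // M.count 0 = 0 ∧ IsGordon M} ≃
    {M : Multiset ℕ // M.count 0 = 0 ∧ IsAndrews M} :=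
  (subtypeEquivSigmaFiber _ fun M => (repeated M).card).trans <|
    (Equiv.sigmaCongrRight fun r =>
      (gordonAndrewsEquiv r).trans (Equiv.subtypeEquivRight fun _ => isAndrewsOfRank_iff)).trans
    (subtypeEquivSigmaFiber _ fun M => largestRepeated M / 2).symm

lemma sum_gordonEquivAndrews (M : {M : Multiset ℕ // M.count 0 = 0 ∧ IsGordon M}) :
    (gordonEquivAndrews M).1.sum = M.1.sum :=
  (gordonAndrewsEquiv_sum_card _ _).1

def partitionEquiv (p : Multiset ℕ → Prop) (n : ℕ) :
    {π : n.Partition // p π.parts} ≃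
      {M : {M : Multiset ℕ // M.count 0 = 0 ∧ p M} // M.1.sum = n} where
  toFun π :=
    ⟨⟨π.1.parts, count_eq_zero.2 fun h => (π.1.parts_pos h).ne rfl, π.2⟩, π.1.parts_sum⟩
  invFun M := ⟨⟨M.1.1, fun hi => Nat.pos_of_ne_zero fun h => count_eq_zero.1 M.1.2.1 (h ▸ hi),
    M.2⟩, M.1.2.2⟩
  left_inv _ := rfl
  right_inv _ := rfl

theorem card_partition_eq_of_equiv {p q : Multiset ℕ → Prop}
    (e : {M : Multiset ℕ // M.count 0 = 0 ∧ p M} ≃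
      {M : Multiset ℕ // M.count 0 = 0 ∧ q M})
    (he : ∀ M, (e M).1.sum = M.1.sum) (n : ℕ) :
    Nat.card {π : n.Partition // p π.parts} = Nat.card {π : n.Partition // q π.parts} :=
  Nat.card_congr <| (partitionEquiv p n).trans <|
    (e.subtypeEquiv fun M => by rw [he]).trans (partitionEquiv q n).symm

end GordonAndrews

/-- The bijection `f : 𝒢₂ → 𝒜₂`: the number of partitions of `n` counted by Gordon's
`G_{3,2}(n)` (`1` appears at most once, and `j` and `j+1` together appear at most twice) equals
the number counted by Andrews' `A₂(n)`. -/
theorem G32_eq_A2 (n : ℕ) :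
    Nat.card {π : n.Partition //
        π.parts.count 1 ≤ 1 ∧
        (∀ j, 1 ≤ j → π.parts.count j + π.parts.count (j + 1) ≤ 2)} =
      Nat.card {π : n.Partition //
        (∀ j, Odd j → π.parts.count j ≤ 1) ∧
        (∀ j, Odd j → j < largestRepeatedPart π → π.parts.count j = 0) ∧
        (∀ j, Even j → 0 < j → j < largestRepeatedPart π → 2 ≤ π.parts.count j)} :=
  GordonAndrews.card_partition_eq_of_equiv GordonAndrews.gordonEquivAndrews
    GordonAndrews.sum_gordonEquivAndrews n
end

section
/- Let q be a complex number with |q| < 1, and for each complex number a define F_1(a) := ∑_{n=0}^∞ a^(2n) q^(2n(n+1)) (q; q^2)_n (−a q^(2n+2); q)_∞ / ((q^2; q^2)_n) and F_3(a) := ∑_{n=0}^∞ a^(2n) q^(2n^2) (q; q^2)_n (−a q^(2n+1); q)_∞ / ((q^2; q^2)_n). Then for every complex a, F_3(a) = F_1(a) + a q (1 + a q) F_1(a q). -/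
/-- The finite q-Pochhammer symbol `(a; q)_n = ∏_{h=0}^{n-1} (1 - a q^h)`. -/
noncomputable def qPoch (a q : ℂ) (n : ℕ) : ℂ := ∏ h ∈ Finset.range n, (1 - a * q ^ h)

/-- The infinite q-Pochhammer symbol `(a; q)_∞ = ∏_{h=0}^{∞} (1 - a q^h)`. -/
noncomputable def qPochInf (a q : ℂ) : ℂ := ∏' h : ℕ, (1 - a * q ^ h)

/-- `F₁(a) = ∑_{n≥0} a^{2n} q^{2n(n+1)} (q;q²)_n (-a q^{2n+2};q)_∞ / (q²;q²)_n`. -/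
noncomputable def F₁ (q a : ℂ) : ℂ :=
  ∑' n : ℕ, a ^ (2 * n) * q ^ (2 * n * (n + 1)) * qPoch q (q ^ 2) n *
      qPochInf (-(a * q ^ (2 * n + 2))) q / qPoch (q ^ 2) (q ^ 2) n

/-- `F₃(a) = ∑_{n≥0} a^{2n} q^{2n²} (q;q²)_n (-a q^{2n+1};q)_∞ / (q²;q²)_n`. -/
noncomputable def F₃ (q a : ℂ) : ℂ :=
  ∑' n : ℕ, a ^ (2 * n) * q ^ (2 * n ^ 2) * qPoch q (q ^ 2) n *
      qPochInf (-(a * q ^ (2 * n + 1))) q / qPoch (q ^ 2) (q ^ 2) n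

/-! Write `T n` for the `n`-th summand of `F₃(a)`. After peeling the factors `1 + a q^m` off the
infinite products, the `n`-th summands of `F₁(a)` and `F₁(aq)` satisfy the polynomial identity
`F₁(a)ₙ + aq(1 + aq) F₁(aq)ₙ = q^{2n} T n + (1 - q^{2n+2}) T (n+1)`. Summing over `n`, the second
part is `∑ (1 - q^{2n}) T n` shifted by one (its `n = 0` term vanishes), so the two parts add up to
`∑ T n = F₃(a)`. The Gaussian factor `q^{2n²}` makes every series involved converge absolutely. -/

open Finset Filter Topology

lemma norm_tprod_one_add_le_exp {ι R : Type*} [NormedCommRing R] [NormOneClass R]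
    [NormMulClass R] [CompleteSpace R] {f : ι → R} (hf : Summable fun i ↦ ‖f i‖) :
    ‖∏' i, (1 + f i)‖ ≤ Real.exp (∑' i, ‖f i‖) := by
  have hprod := (multipliable_one_add_of_summable hf).hasProd.norm
  refine le_of_tendsto' hprod fun s ↦ ?_
  calc ∏ i ∈ s, ‖1 + f i‖ = ‖∏ i ∈ s, (1 + f i)‖ := (norm_prod _ _).symm
    _ ≤ ‖∏ i ∈ s, (1 + f i) - 1‖ + 1 := by
        simpa using norm_le_norm_sub_add (∏ i ∈ s, (1 + f i)) 1
    _ ≤ Real.exp (∑ i ∈ s, ‖f i‖) := by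
        linarith [s.norm_prod_one_add_sub_one_le f]
    _ ≤ Real.exp (∑' i, ‖f i‖) :=
        Real.exp_le_exp.2 (hf.sum_le_tsum s fun i _ ↦ norm_nonneg _)

lemma norm_pow_le_one_of_norm_le_one {R : Type*} [SeminormedRing R] [NormOneClass R] {x : R}
    (hx : ‖x‖ ≤ 1) (n : ℕ) : ‖x ^ n‖ ≤ 1 :=
  (norm_pow_le x n).trans (pow_le_one₀ (norm_nonneg x) hx)

lemma summable_pow_mul_pow_sq {r : ℝ} (hr₀ : 0 ≤ r) (hr : r < 1) (R : ℝ) :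
    Summable fun n : ℕ ↦ R ^ n * r ^ (n ^ 2) := by
  have hlim : Tendsto (fun n : ℕ ↦ R * r ^ n) atTop (𝓝 0) := by
    simpa using (tendsto_pow_atTop_nhds_zero_of_lt_one hr₀ hr).const_mul R
  refine Summable.of_norm_bounded_eventually_nat
    (summable_geometric_of_lt_one (by norm_num : (0 : ℝ) ≤ 1 / 2) (by norm_num)) ?_
  filter_upwards [(hlim.norm.eventually_le_const (by norm_num : ‖(0 : ℝ)‖ < 1 / 2))] with n hn
  rw [show R ^ n * r ^ (n ^ 2) = (R * r ^ n) ^ n by ring, norm_pow]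
  exact pow_le_pow_left₀ (norm_nonneg _) hn n

lemma tsum_eq_tsum_mul_add_one_sub_mul_succ {R : Type*} [Ring R] [TopologicalSpace R]
    [IsTopologicalRing R] [T2Space R] {T v : ℕ → R} (hv : v 0 = 1)
    (h₁ : Summable fun n ↦ v n * T n) (h₂ : Summable fun n ↦ (1 - v n) * T n) :
    ∑' n, T n = ∑' n, (v n * T n + (1 - v (n + 1)) * T (n + 1)) := by
  have h₂' := (summable_nat_add_iff 1).2 h₂
  calc ∑' n, T n = ∑' n, (v n * T n + (1 - v n) * T n) := by
        simp only [← add_mul, add_sub_cancel, one_mul]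
    _ = ∑' n, v n * T n + ∑' n, (1 - v (n + 1)) * T (n + 1) := by
        rw [h₁.tsum_add h₂, tsum_eq_zero_add' (f := fun n ↦ (1 - v n) * T n) h₂', hv, sub_self,
          zero_mul, zero_add]
    _ = _ := (h₁.tsum_add h₂').symm

section qPochhammer

variable {q : ℂ}

lemma qPoch_succ (a q : ℂ) (n : ℕ) : qPoch a q (n + 1) = qPoch a q n * (1 - a * q ^ n) :=
  prod_range_succ _ _

lemma norm_qPoch_le (a : ℂ) (hq : ‖q‖ ≤ 1) (n : ℕ) : ‖qPoch a q n‖ ≤ (1 + ‖a‖) ^ n := by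
  rw [qPoch, norm_prod, pow_eq_prod_const]
  refine prod_le_prod (fun _ _ ↦ norm_nonneg _) fun _ _ ↦ (norm_sub_le _ _).trans ?_
  rw [norm_one, norm_mul]
  gcongr
  exact mul_le_of_le_one_right (norm_nonneg a) (norm_pow_le_one_of_norm_le_one hq _)

lemma one_sub_norm_pow_le_norm_qPoch {a : ℂ} (ha : ‖a‖ ≤ 1) (hq : ‖q‖ ≤ 1) (n : ℕ) :
    (1 - ‖a‖) ^ n ≤ ‖qPoch a q n‖ := by
  rw [qPoch, norm_prod, pow_eq_prod_const]
  refine prod_le_prod (fun _ _ ↦ sub_nonneg.2 ha) fun _ _ ↦ le_trans ?_ (norm_sub_norm_le _ _)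
  rw [norm_one, norm_mul]
  gcongr
  exact mul_le_of_le_one_right (norm_nonneg a) (norm_pow_le_one_of_norm_le_one hq _)

lemma qPoch_ne_zero {a : ℂ} (ha : ‖a‖ < 1) (hq : ‖q‖ ≤ 1) (n : ℕ) : qPoch a q n ≠ 0 :=
  norm_pos_iff.1 <| (pow_pos (sub_pos.2 ha) n).trans_le
    (one_sub_norm_pow_le_norm_qPoch ha.le hq n)

variable (hq : ‖q‖ < 1)
include hq

lemma summable_norm_mul_pow (b : ℂ) : Summable fun h : ℕ ↦ ‖b * q ^ h‖ := by
  simpa [norm_mul, norm_pow] using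
    (summable_geometric_of_lt_one (norm_nonneg q) hq).mul_left ‖b‖

lemma qPochInf_eq_one_sub_mul (b : ℂ) : qPochInf b q = (1 - b) * qPochInf (b * q) q := by
  have hmul : Multipliable fun h : ℕ ↦ 1 - b * q * q ^ h := by
    simpa [sub_eq_add_neg] using multipliable_one_add_of_summable
      (f := fun h : ℕ ↦ -(b * q * q ^ h)) (by simpa using summable_norm_mul_pow hq (b * q))
  rw [qPochInf, tprod_eq_zero_mul' (hmul.congr fun h ↦ by ring), qPochInf]
  simp [pow_succ', mul_assoc]

lemma qPochInf_neg_mul_pow (c : ℂ) (m : ℕ) :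
    qPochInf (-(c * q ^ m)) q = (1 + c * q ^ m) * qPochInf (-(c * q ^ (m + 1))) q := by
  rw [qPochInf_eq_one_sub_mul hq, sub_neg_eq_add, neg_mul, mul_assoc, ← pow_succ]

lemma norm_qPochInf_le (b : ℂ) : ‖qPochInf b q‖ ≤ Real.exp (‖b‖ / (1 - ‖q‖)) := by
  have hsum : ∑' h : ℕ, ‖-(b * q ^ h)‖ = ‖b‖ / (1 - ‖q‖) := by
    simp only [norm_neg, norm_mul, norm_pow]
    rw [tsum_mul_left, tsum_geometric_of_lt_one (norm_nonneg q) hq, div_eq_mul_inv]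
  rw [qPochInf, ← hsum]
  simpa [sub_eq_add_neg] using norm_tprod_one_add_le_exp (f := fun h : ℕ ↦ -(b * q ^ h))
    (by simpa using summable_norm_mul_pow hq b)

lemma norm_qPochInf_neg_mul_pow_le (c : ℂ) (m : ℕ) :
    ‖qPochInf (-(c * q ^ m)) q‖ ≤ Real.exp (‖c‖ / (1 - ‖q‖)) := by
  refine (norm_qPochInf_le hq _).trans (Real.exp_le_exp.2 ?_)
  refine div_le_div_of_nonneg_right ?_ (sub_nonneg.2 hq.le)
  rw [norm_neg, norm_mul]
  exact mul_le_of_le_one_right (norm_nonneg c) (norm_pow_le_one_of_norm_le_one hq.le m)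

end qPochhammer

noncomputable def F₁Term (q a : ℂ) (n : ℕ) : ℂ :=
  a ^ (2 * n) * q ^ (2 * n * (n + 1)) * qPoch q (q ^ 2) n *
    qPochInf (-(a * q ^ (2 * n + 2))) q / qPoch (q ^ 2) (q ^ 2) n

noncomputable def F₃Term (q a : ℂ) (n : ℕ) : ℂ :=
  a ^ (2 * n) * q ^ (2 * n ^ 2) * qPoch q (q ^ 2) n *
    qPochInf (-(a * q ^ (2 * n + 1))) q / qPoch (q ^ 2) (q ^ 2) n

section Terms

variable {q : ℂ} (hq : ‖q‖ < 1)
include hq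

lemma summable_qSeries (a : ℂ) {w : ℕ → ℂ} {B : ℝ} (hw : ∀ n, ‖w n‖ ≤ B) :
    Summable fun n : ℕ ↦
      a ^ (2 * n) * q ^ (2 * n ^ 2) * qPoch q (q ^ 2) n * w n / qPoch (q ^ 2) (q ^ 2) n := by
  have hq2 : ‖q ^ 2‖ < 1 := by rw [norm_pow]; exact pow_lt_one₀ (norm_nonneg q) hq two_ne_zero
  have hmaj := (summable_pow_mul_pow_sq (sq_nonneg ‖q‖) (by rwa [← norm_pow])
    (‖a‖ ^ 2 * (1 + ‖q‖) / (1 - ‖q ^ 2‖))).mul_left B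
  refine hmaj.of_norm_bounded fun n ↦ ?_
  have hB : 0 ≤ B := (norm_nonneg _).trans (hw 0)
  have hlow := one_sub_norm_pow_le_norm_qPoch hq2.le hq2.le n
  have hup := norm_qPoch_le q hq2.le n
  have hpos : 0 < (1 - ‖q ^ 2‖) ^ n := pow_pos (sub_pos.2 hq2) n
  rw [norm_div, norm_mul, norm_mul, norm_mul, norm_pow, norm_pow]
  calc ‖a‖ ^ (2 * n) * ‖q‖ ^ (2 * n ^ 2) * ‖qPoch q (q ^ 2) n‖ * ‖w n‖ /
        ‖qPoch (q ^ 2) (q ^ 2) n‖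
      ≤ ‖a‖ ^ (2 * n) * ‖q‖ ^ (2 * n ^ 2) * (1 + ‖q‖) ^ n * B / (1 - ‖q ^ 2‖) ^ n := by
        gcongr
        exact hw n
    _ = B * ((‖a‖ ^ 2 * (1 + ‖q‖) / (1 - ‖q ^ 2‖)) ^ n * (‖q‖ ^ 2) ^ (n ^ 2)) := by
        rw [div_pow, mul_pow, ← pow_mul, ← pow_mul]
        ring

lemma F₁Term_add_mul_F₁Term (a : ℂ) (n : ℕ) :
    F₁Term q a n + a * q * (1 + a * q) * F₁Term q (a * q) n =
      q ^ (2 * n) * F₃Term q a n + (1 - q ^ (2 * (n + 1))) * F₃Term q a (n + 1) := by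
  have hq2 : ‖q ^ 2‖ < 1 := by rw [norm_pow]; exact pow_lt_one₀ (norm_nonneg q) hq two_ne_zero
  have hden := qPoch_ne_zero hq2 hq2.le (n + 1)
  rw [qPoch_succ] at hden
  obtain ⟨hden, hfac⟩ := mul_ne_zero_iff.1 hden
  have h₁ : -(a * q * q ^ (2 * n + 2)) = -(a * q ^ (2 * n + 3)) := by ring
  have h₃ : 2 * (n + 1) + 1 = 2 * n + 3 := by ring
  simp only [F₁Term, F₃Term, h₁, h₃, qPochInf_neg_mul_pow hq a (2 * n + 1),
    qPochInf_neg_mul_pow hq a (2 * n + 2), qPoch_succ]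
  field_simp
  ring

lemma summable_F₁Term (a : ℂ) : Summable (F₁Term q a) := by
  refine (summable_qSeries hq a (w := fun n ↦ q ^ (2 * n) * qPochInf (-(a * q ^ (2 * n + 2))) q)
    fun n ↦ norm_mul_le_of_le (norm_pow_le_one_of_norm_le_one hq.le _)
      (norm_qPochInf_neg_mul_pow_le hq a _)).congr fun n ↦ ?_
  simp only [F₁Term]
  ring

lemma summable_pow_mul_F₃Term (a : ℂ) : Summable fun n ↦ q ^ (2 * n) * F₃Term q a n := by
  refine (summable_qSeries hq a (w := fun n ↦ q ^ (2 * n) * qPochInf (-(a * q ^ (2 * n + 1))) q)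
    fun n ↦ norm_mul_le_of_le (norm_pow_le_one_of_norm_le_one hq.le _)
      (norm_qPochInf_neg_mul_pow_le hq a _)).congr fun n ↦ ?_
  simp only [F₃Term]
  ring

lemma summable_one_sub_pow_mul_F₃Term (a : ℂ) :
    Summable fun n ↦ (1 - q ^ (2 * n)) * F₃Term q a n := by
  refine (summable_qSeries hq a
    (w := fun n ↦ (1 - q ^ (2 * n)) * qPochInf (-(a * q ^ (2 * n + 1))) q)
    fun n ↦ norm_mul_le_of_le
      ((norm_sub_le _ _).trans (add_le_add le_rfl (norm_pow_le_one_of_norm_le_one hq.le _)))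
      (norm_qPochInf_neg_mul_pow_le hq a _)).congr fun n ↦ ?_
  simp only [F₃Term]
  ring

end Terms

/-- The key q-difference equation `F₃(a) = F₁(a) + aq(1+aq) F₁(aq)`. -/
theorem F_qdifference (q : ℂ) (hq : ‖q‖ < 1) (a : ℂ) :
    F₃ q a = F₁ q a + a * q * (1 + a * q) * F₁ q (a * q) := by
  calc F₃ q a
      = ∑' n, (q ^ (2 * n) * F₃Term q a n + (1 - q ^ (2 * (n + 1))) * F₃Term q a (n + 1)) :=
        tsum_eq_tsum_mul_add_one_sub_mul_succ (by simp) (summable_pow_mul_F₃Term hq a)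
          (summable_one_sub_pow_mul_F₃Term hq a)
    _ = ∑' n, (F₁Term q a n + a * q * (1 + a * q) * F₁Term q (a * q) n) :=
        tsum_congr fun n ↦ (F₁Term_add_mul_F₁Term hq a n).symm
    _ = F₁ q a + a * q * (1 + a * q) * F₁ q (a * q) := by
        rw [(summable_F₁Term hq a).tsum_add ((summable_F₁Term hq (a * q)).mul_left _),
          tsum_mul_left]
        rfl
end
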